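/- arXiv:2305.00825 — 3 statements merged into one kernel-verified Lean document; each statement's English description precedes it below -/
import Mathlib

section
/- Let S₁, S₂ ⊆ ℝ be finite sets with 0 ∈ S₁ ∩ S₂ and |S₁| = |S₂| = n, and let Γ = S₁ × S₂ ⊆ ℝ². Then for every integer k ≥ 2, cov_k(Γ) ≤ ⌈3k/2⌉ · (n−1). -/
open scoped Classical

/-- An affine line in `ℝ²`, given by the equation `a * x + b * y = c` with `(a, b) ≠ (0, 0)`. -/
structure Line2 where
  a : ℝ
  b : ℝ
  c : ℝ
  nondeg : a ≠ 0 ∨ b ≠ 0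

/-- Membership of a point on a line. -/
def Line2.Mem (l : Line2) (p : ℝ × ℝ) : Prop :=
  l.a * p.1 + l.b * p.2 = l.c

/-- `L` is a `k`-cover of `Γ`: a multiset of lines, none through the origin, such that
every point of `Γ` other than the origin lies on at least `k` lines (with multiplicity). -/
def IsKCover (Γ : Set (ℝ × ℝ)) (k : ℕ) (L : Multiset Line2) : Prop :=
  (∀ l ∈ L, ¬ l.Mem (0, 0)) ∧
    ∀ p ∈ Γ, p ≠ (0, 0) → k ≤ (L.filter (fun l => l.Mem p)).card

/-- The minimum cardinality of a `k`-cover of `Γ`. -/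
noncomputable def cov (Γ : Set (ℝ × ℝ)) (k : ℕ) : ℕ :=
  sInf {m | ∃ L : Multiset Line2, IsKCover Γ k L ∧ Multiset.card L = m}

/-- Vertical line `x = s`. -/
def vline (s : ℝ) : Line2 := ⟨1, 0, s, Or.inl one_ne_zero⟩

/-- Horizontal line `y = t`. -/
def hline (t : ℝ) : Line2 := ⟨0, 1, t, Or.inr one_ne_zero⟩

/-- Line through `(s, 0)` and `(0, t)`: `t*x + s*y = t*s`. -/
def cline (s t : ℝ) (ht : t ≠ 0) : Line2 := ⟨t, s, t * s, Or.inl ht⟩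

lemma filter_nsmul' (p : Line2 → Prop) (m : ℕ) (s : Multiset Line2) :
    (m • s).filter p = m • s.filter p := by
  induction m with
  | zero => simp
  | succ m ih => simp [succ_nsmul, Multiset.filter_add, ih]

theorem stmt3 (S₁ S₂ : Finset ℝ) (n : ℕ)
    (h0₁ : (0 : ℝ) ∈ S₁) (h0₂ : (0 : ℝ) ∈ S₂)
    (hn : S₁.card = n) (hm : S₂.card = n)
    (k : ℕ) (hk : 2 ≤ k) :
    (cov (↑(S₁ ×ˢ S₂)) k : ℝ) ≤ (⌈(3 * (k : ℝ)) / 2⌉ : ℤ) * ((n : ℝ) - 1) := by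
  have hn1 : 1 ≤ n := by
    rw [← hn]; exact Finset.card_pos.mpr ⟨0, h0₁⟩
  set A := S₁.erase 0 with hAdef
  set B := S₂.erase 0 with hBdef
  have hA : A.card = n - 1 := by rw [hAdef, Finset.card_erase_of_mem h0₁, hn]
  have hB : B.card = n - 1 := by rw [hBdef, Finset.card_erase_of_mem h0₂, hm]
  have hcardEq : A.card = B.card := by rw [hA, hB]
  have hmemA : ∀ s ∈ A, s ≠ 0 := fun s hs => (Finset.mem_erase.mp hs).1
  have hmemB : ∀ t ∈ B, t ≠ 0 := fun t ht => (Finset.mem_erase.mp ht).1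
  let e : {x // x ∈ A} ≃ {x // x ∈ B} := Finset.equivOfCardEq hcardEq
  set α := (k + 1) / 2 with hα
  set β := k / 2 with hβ
  let V : Multiset Line2 := A.val.map vline
  let H : Multiset Line2 := B.val.map hline
  let C : Multiset Line2 :=
    A.attach.val.map (fun s => cline s.1 (e s).1 (hmemB _ (e s).2))
  let L : Multiset Line2 := α • V + β • H + α • C
  -- cardinality of L
  have hcV : Multiset.card V = n - 1 := by
    simpa [V] using hA
  have hcH : Multiset.card H = n - 1 := by
    simpa [H] using hB
  have hcC : Multiset.card C = n - 1 := by
    rw [show Multiset.card C = A.card by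
      simp only [C, Multiset.card_map]
      exact Multiset.card_attach]
    exact hA
  have hcardL : Multiset.card L = (2 * α + β) * (n - 1) := by
    simp only [L, Multiset.card_add, Multiset.card_nsmul, hcV, hcH, hcC]
    ring
  -- no line through the origin
  have horig : ∀ l ∈ L, ¬ l.Mem (0, 0) := by
    intro l hl
    simp only [L, Multiset.mem_add, Multiset.mem_nsmul] at hl
    rcases hl with (⟨-, hl⟩ | ⟨-, hl⟩) | ⟨-, hl⟩
    · rcases Multiset.mem_map.mp hl with ⟨s, hs, rfl⟩
      simp [Line2.Mem, vline]
      exact fun h => hmemA s hs h.symm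
    · rcases Multiset.mem_map.mp hl with ⟨t, ht, rfl⟩
      simp [Line2.Mem, hline]
      exact fun h => hmemB t ht h.symm
    · rcases Multiset.mem_map.mp hl with ⟨s, hs, rfl⟩
      simp [Line2.Mem, cline]
      exact ⟨fun h => hmemB _ (e s).2 h, fun h => hmemA _ s.2 h⟩
  -- coverage
  have hcover : ∀ p ∈ (↑(S₁ ×ˢ S₂) : Set (ℝ × ℝ)), p ≠ (0, 0) →
      k ≤ (L.filter (fun l => l.Mem p)).card := by
    intro p hp hp0
    obtain ⟨x, y⟩ := p
    rw [Finset.mem_coe, Finset.mem_product] at hp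
    obtain ⟨hx, hy⟩ := hp
    set P : Line2 → Prop := fun l => l.Mem (x, y) with hP
    have hsplit : (L.filter P).card
        = α * (V.filter P).card + β * (H.filter P).card + α * (C.filter P).card := by
      simp [L, Multiset.filter_add, filter_nsmul', Multiset.card_add, Multiset.card_nsmul]
    have hVmem : x ≠ 0 → 1 ≤ (V.filter P).card := by
      intro hx0
      have hmem : vline x ∈ V := Multiset.mem_map.mpr
        ⟨x, Finset.mem_val.mpr (Finset.mem_erase.mpr ⟨hx0, hx⟩), rfl⟩
      have : vline x ∈ V.filter P := Multiset.mem_filter.mpr ⟨hmem, by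
        simp [P, Line2.Mem, vline]⟩
      exact Multiset.card_pos_iff_exists_mem.mpr ⟨_, this⟩
    have hHmem : y ≠ 0 → 1 ≤ (H.filter P).card := by
      intro hy0
      have hmem : hline y ∈ H := Multiset.mem_map.mpr
        ⟨y, Finset.mem_val.mpr (Finset.mem_erase.mpr ⟨hy0, hy⟩), rfl⟩
      have : hline y ∈ H.filter P := Multiset.mem_filter.mpr ⟨hmem, by
        simp [P, Line2.Mem, hline]⟩
      exact Multiset.card_pos_iff_exists_mem.mpr ⟨_, this⟩
    by_cases hx0 : x = 0
    · -- then y ≠ 0, point on the y-axis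
      have hy0 : y ≠ 0 := by
        intro h; exact hp0 (by simp [hx0, h])
      -- cross line through (0, y)
      have hyB : y ∈ B := Finset.mem_erase.mpr ⟨hy0, hy⟩
      set s : {x // x ∈ A} := e.symm ⟨y, hyB⟩ with hs
      have hCmem : 1 ≤ (C.filter P).card := by
        have hmem : cline s.1 (e s).1 (hmemB _ (e s).2) ∈ C :=
          Multiset.mem_map.mpr ⟨s, Multiset.mem_attach _ _, rfl⟩
        have hes : (e s).1 = y := by rw [hs, Equiv.apply_symm_apply]
        have : cline s.1 (e s).1 (hmemB _ (e s).2) ∈ C.filter P :=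
          Multiset.mem_filter.mpr ⟨hmem, by
            simp [P, Line2.Mem, cline, hx0, hes]; ring⟩
        exact Multiset.card_pos_iff_exists_mem.mpr ⟨_, this⟩
      have h1 := hHmem hy0
      calc k ≤ β * 1 + α * 1 := by omega
        _ ≤ β * (H.filter P).card + α * (C.filter P).card := by
            exact Nat.add_le_add (Nat.mul_le_mul_left _ h1) (Nat.mul_le_mul_left _ hCmem)
        _ ≤ _ := by rw [hsplit]; omega
    · by_cases hy0 : y = 0
      · -- point on the x-axis
        have hxA : x ∈ A := Finset.mem_erase.mpr ⟨hx0, hx⟩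
        set s : {x // x ∈ A} := ⟨x, hxA⟩ with hs
        have hCmem : 1 ≤ (C.filter P).card := by
          have hmem : cline s.1 (e s).1 (hmemB _ (e s).2) ∈ C :=
            Multiset.mem_map.mpr ⟨s, Multiset.mem_attach _ _, rfl⟩
          have : cline s.1 (e s).1 (hmemB _ (e s).2) ∈ C.filter P :=
            Multiset.mem_filter.mpr ⟨hmem, by
              simp [P, Line2.Mem, cline, hy0, hs]⟩
          exact Multiset.card_pos_iff_exists_mem.mpr ⟨_, this⟩
        have h1 := hVmem hx0
        calc k ≤ α * 1 + α * 1 := by omega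
          _ ≤ α * (V.filter P).card + α * (C.filter P).card := by
              exact Nat.add_le_add (Nat.mul_le_mul_left _ h1) (Nat.mul_le_mul_left _ hCmem)
          _ ≤ _ := by rw [hsplit]; omega
      · -- interior point
        have h1 := hVmem hx0
        have h2 := hHmem hy0
        calc k ≤ α * 1 + β * 1 := by omega
          _ ≤ α * (V.filter P).card + β * (H.filter P).card := by
              exact Nat.add_le_add (Nat.mul_le_mul_left _ h1) (Nat.mul_le_mul_left _ h2)
          _ ≤ _ := by rw [hsplit]; omega
  -- so cov ≤ (2α+β)(n-1)
  have hcov : cov (↑(S₁ ×ˢ S₂)) k ≤ (2 * α + β) * (n - 1) :=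
    Nat.sInf_le ⟨L, ⟨horig, hcover⟩, hcardL⟩
  -- ceiling computation
  have hceil : (⌈(3 * (k : ℝ)) / 2⌉ : ℤ) = ((2 * α + β : ℕ) : ℤ) := by
    rcases Nat.even_or_odd' k with ⟨m, hm' | hm'⟩
    · have hαv : α = m := by omega
      have hβv : β = m := by omega
      rw [hαv, hβv, hm']
      rw [Int.ceil_eq_iff]
      constructor <;> push_cast <;> nlinarith [Nat.cast_nonneg (α := ℝ) m]
    · have hαv : α = m + 1 := by omega
      have hβv : β = m := by omega
      rw [hαv, hβv, hm']
      rw [Int.ceil_eq_iff]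
      constructor <;> push_cast <;> nlinarith [Nat.cast_nonneg (α := ℝ) m]
  rw [hceil]
  have hcast : (((2 * α + β) * (n - 1) : ℕ) : ℝ)
      = ((2 * α + β : ℕ) : ℝ) * ((n : ℝ) - 1) := by
    push_cast [Nat.cast_sub hn1]
    ring
  calc (cov (↑(S₁ ×ˢ S₂)) k : ℝ) ≤ (((2 * α + β) * (n - 1) : ℕ) : ℝ) := by
        exact_mod_cast hcov
    _ = _ := by rw [hcast]; push_cast; ring
end

section
/- For every ε > 0 there exists N such that for all integers n ≥ N and all integers k ≥ 1, the standard grid Γ_n satisfies cov_k(Γ_n) ≥ (2 − e^{−1/2} − ε) · k(n−1). -/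
open scoped Classical

/-- The standard grid `{0, 1, …, n-1} × {0, 1, …, n-1} ⊆ ℝ²`. -/
def stdGrid (n : ℕ) : Set (ℝ × ℝ) :=
  {p : ℝ × ℝ | ∃ i < n, ∃ j < n, p = ((i : ℝ), (j : ℝ))}

open Finset

lemma inv_le_log_sub (b : ℕ) (hb : 1 ≤ b) :
    ((b:ℝ)+1)⁻¹ ≤ Real.log (b+1) - Real.log b := by
  have hb0 : (0:ℝ) < b := by exact_mod_cast hb
  have hb1 : (0:ℝ) < (b:ℝ)+1 := by linarith
  have h := Real.log_le_sub_one_of_pos (x := (b:ℝ)/((b:ℝ)+1)) (by positivity)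
  rw [Real.log_div (by positivity) (by positivity)] at h
  have : (b:ℝ)/((b:ℝ)+1) - 1 = -(((b:ℝ)+1)⁻¹) := by field_simp; ring
  rw [this] at h
  linarith

lemma harmonic_Icc_le (a : ℕ) (ha : 2 ≤ a) : ∀ b : ℕ, a - 1 ≤ b →
    ∑ t ∈ Icc a b, ((t:ℝ))⁻¹ ≤ Real.log b - Real.log (a-1) := by
  intro b
  induction b with
  | zero => intro h; omega
  | succ b ih =>
    intro h
    by_cases hab : a - 1 ≤ b
    · have hab' : a ≤ b + 1 := by omega
      rw [Finset.sum_Icc_succ_top hab']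
      have h2 := inv_le_log_sub b (by omega)
      have := ih hab
      push_cast
      push_cast at this h2
      linarith
    · have : b + 1 < a := by omega
      rw [Finset.Icc_eq_empty (by omega)]
      have ha2 : a = b + 2 := by omega
      subst ha2
      push_cast
      simp only [Finset.sum_empty]
      have : (b:ℝ) + 2 - 1 = (b:ℝ) + 1 := by ring
      rw [this]
      simp

noncomputable def wt (n t₀ : ℕ) (p : ℕ × ℕ) : ℝ :=
  if p.1 = 0 ∧ p.2 = 0 then 0
  else if p.1 = 0 ∨ p.2 = 0 then 1/2
  else if n ≤ p.1 + p.2 ∧ t₀ + (p.1 + p.2) + 1 ≤ 2*n then ((2*n - 1 - (p.1+p.2) : ℕ) : ℝ)⁻¹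
  else 0

lemma wt_nonneg (n t₀ : ℕ) (p : ℕ × ℕ) : 0 ≤ wt n t₀ p := by
  unfold wt
  split_ifs <;> positivity

lemma wt_axis1 (n t₀ : ℕ) (i : ℕ) (hi : i ∈ Icc 1 (n-1)) : wt n t₀ (i, 0) = 1/2 := by
  simp only [mem_Icc] at hi
  unfold wt
  rw [if_neg (by simp; omega), if_pos (by simp)]

lemma wt_axis2 (n t₀ : ℕ) (j : ℕ) (hj : j ∈ Icc 1 (n-1)) : wt n t₀ (0, j) = 1/2 := by
  simp only [mem_Icc] at hj
  unfold wt
  rw [if_neg (by simp; omega), if_pos (by simp)]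

lemma wt_diag (n t₀ : ℕ) (hn : 2 ≤ n) (ht1 : 1 ≤ t₀) (t x : ℕ) (ht : t ∈ Icc t₀ (n-1))
    (hx : x ∈ Icc (n-t) (n-1)) : wt n t₀ (x, 2*n-1-t-x) = ((t:ℝ))⁻¹ := by
  simp only [mem_Icc] at ht hx
  unfold wt
  rw [if_neg (by simp; omega), if_neg (by push_neg; constructor <;> omega),
    if_pos (by constructor <;> omega)]
  congr 1
  congr 1
  omega

lemma wt_support (n t₀ : ℕ) (hn : 2 ≤ n) (ht1 : 1 ≤ t₀) (p : ℕ × ℕ)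
    (hp : p ∈ Finset.range n ×ˢ Finset.range n)
    (hne : wt n t₀ p ≠ 0) :
    p ∈ ((Icc 1 (n-1)).image (fun i => (i, 0)) ∪ (Icc 1 (n-1)).image (fun j => ((0:ℕ), j)))
      ∪ (Icc t₀ (n-1)).biUnion (fun t => (Icc (n-t) (n-1)).image (fun x => (x, 2*n-1-t-x))) := by
  obtain ⟨i, j⟩ := p
  simp only [mem_product, mem_range] at hp
  simp only [mem_union, mem_image, mem_biUnion, mem_Icc]
  unfold wt at hne
  simp only at hne
  split_ifs at hne with h1 h2 h3
  · exact absurd rfl hne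
  · -- axis case
    rcases h2 with h2 | h2
    · exact Or.inl (Or.inr ⟨j, ⟨by omega, by omega⟩, by rw [h2]⟩)
    · exact Or.inl (Or.inl ⟨i, ⟨by omega, by omega⟩, by rw [h2]⟩)
  · -- diagonal case
    refine Or.inr ⟨2*n - 1 - (i+j), ⟨by omega, by omega⟩, i, ⟨by omega, by omega⟩, ?_⟩
    have : 2*n-1-(2*n-1-(i+j))-i = j := by omega
    rw [this]
  · exact absurd rfl hne

lemma wt_sum_eq (n t₀ : ℕ) (hn : 2 ≤ n) (ht1 : 1 ≤ t₀) (f : ℕ × ℕ → ℝ) :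
    ∑ p ∈ Finset.range n ×ˢ Finset.range n, wt n t₀ p * f p
      = (∑ i ∈ Icc 1 (n-1), (1/2 : ℝ) * f (i, 0))
        + (∑ j ∈ Icc 1 (n-1), (1/2 : ℝ) * f (0, j))
        + ∑ t ∈ Icc t₀ (n-1), ∑ x ∈ Icc (n-t) (n-1), ((t:ℝ))⁻¹ * f (x, 2*n-1-t-x) := by
  set Qa1 := (Icc 1 (n-1)).image (fun i => (i, (0:ℕ))) with hQa1
  set Qa2 := (Icc 1 (n-1)).image (fun j => ((0:ℕ), j)) with hQa2
  set Qd := (Icc t₀ (n-1)).biUnion (fun t => (Icc (n-t) (n-1)).image (fun x => (x, 2*n-1-t-x))) with hQd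
  have hsub : (Qa1 ∪ Qa2) ∪ Qd ⊆ Finset.range n ×ˢ Finset.range n := by
    intro p hp
    simp only [hQa1, hQa2, hQd, mem_union, mem_image, mem_biUnion, mem_Icc] at hp
    simp only [mem_product, mem_range]
    rcases hp with (⟨i, hi, rfl⟩ | ⟨j, hj, rfl⟩) | ⟨t, ht, x, hx, rfl⟩ <;> constructor <;> omega
  rw [← Finset.sum_subset hsub (fun p hp hnp => by
    by_contra hne
    exact hnp (wt_support n t₀ hn ht1 p hp (fun h => hne (by rw [h, zero_mul]))))]
  have hd1 : Disjoint (Qa1 ∪ Qa2) Qd := by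
    rw [Finset.disjoint_left]
    intro p hp hp'
    simp only [hQa1, hQa2, hQd, mem_union, mem_image, mem_biUnion, mem_Icc] at hp hp'
    obtain ⟨t, ht, x, hx, rfl⟩ := hp'
    rcases hp with ⟨i, hi, h⟩ | ⟨j, hj, h⟩ <;>
      simp only [Prod.mk.injEq] at h <;> omega
  have hd2 : Disjoint Qa1 Qa2 := by
    rw [Finset.disjoint_left]
    intro p hp hp'
    simp only [hQa1, hQa2, mem_image, mem_Icc, Prod.mk.injEq] at hp hp'
    obtain ⟨i, hi, h1, h2⟩ := hp
    obtain ⟨j, hj, h3, h4⟩ := hp'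
    omega
  rw [Finset.sum_union hd1, Finset.sum_union hd2]
  congr 1
  · congr 1
    · rw [Finset.sum_image (by intro a _ b _ h; simp only [Prod.mk.injEq] at h; exact h.1)]
      exact Finset.sum_congr rfl (fun i hi => by rw [wt_axis1 n t₀ i hi])
    · rw [Finset.sum_image (by intro a _ b _ h; simp only [Prod.mk.injEq] at h; exact h.2)]
      exact Finset.sum_congr rfl (fun j hj => by rw [wt_axis2 n t₀ j hj])
  · rw [Finset.sum_biUnion (by
      intro t ht t' ht' htt'
      simp only [mem_coe, mem_Icc] at ht ht'
      simp only [Function.onFun]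
      rw [Finset.disjoint_left]
      intro p hp hp'
      simp only [mem_image, mem_Icc] at hp
      obtain ⟨x, hx, rfl⟩ := hp
      simp only [mem_image, mem_Icc, Prod.mk.injEq] at hp'
      obtain ⟨x', hx', h3, h4⟩ := hp'
      exact htt' (by omega))]
    refine Finset.sum_congr rfl (fun t ht => ?_)
    rw [Finset.sum_image (by
      intro a ha b hb h
      simp only [Prod.mk.injEq] at h
      exact h.1)]
    exact Finset.sum_congr rfl (fun x hx => by rw [wt_diag n t₀ hn ht1 t x ht hx])

lemma sum_le_single_val {s : Finset ℕ} (f : ℕ → ℝ) (c : ℝ) (hc : 0 ≤ c)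
    (hb : ∀ i ∈ s, f i ≤ c) (hf : ∀ i ∈ s, 0 ≤ f i)
    (h1 : ∀ a ∈ s, ∀ b ∈ s, f a ≠ 0 → f b ≠ 0 → a = b) :
    ∑ i ∈ s, f i ≤ c := by
  classical
  by_cases hex : ∃ a ∈ s, f a ≠ 0
  · obtain ⟨a, has, hfa⟩ := hex
    calc ∑ i ∈ s, f i ≤ ∑ i ∈ s, (if i = a then c else 0) := by
          refine Finset.sum_le_sum (fun i hi => ?_)
          by_cases hia : i = a
          · rw [if_pos hia]; exact hb i hi
          · rw [if_neg hia]
            by_cases hfi : f i = 0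
            · exact le_of_eq hfi
            · exact absurd (h1 i hi a has hfi hfa) hia
      _ = c := by rw [Finset.sum_ite_eq' s a (fun _ => c), if_pos has]
  · push_neg at hex
    rw [Finset.sum_congr rfl hex]
    simpa using hc

lemma diag_cast (n t x : ℕ) (h : t + x + 1 ≤ 2*n) :
    ((2*n-1-t-x : ℕ) : ℝ) = 2*(n:ℝ) - 1 - t - x := by
  have e : (2*n-1-t-x) + (t + x + 1) = 2*n := by omega
  have := congrArg (fun m : ℕ => (m:ℝ)) e
  push_cast at this
  linarith

set_option maxHeartbeats 2000000 in
lemma line_wt_le (n t₀ : ℕ) (hn : 2 ≤ n) (ht1 : 1 ≤ t₀) (ht2 : t₀ ≤ n-1)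
    (hH : ∑ t ∈ Icc t₀ (n-1), ((t:ℝ))⁻¹ ≤ 1/2)
    (l : Line2) (hl : ¬ l.Mem (0,0)) :
    ∑ p ∈ Finset.range n ×ˢ Finset.range n,
      wt n t₀ p * (if l.Mem ((p.1:ℝ), (p.2:ℝ)) then 1 else 0) ≤ 1 := by
  classical
  have hc : l.c ≠ 0 := by
    intro h
    exact hl (by unfold Line2.Mem; simp [h])
  rw [wt_sum_eq n t₀ hn ht1 (fun p => if l.Mem ((p.1:ℝ), (p.2:ℝ)) then 1 else 0)]
  simp only
  -- axis sums are at most 1/2 each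
  have hSx : ∑ i ∈ Icc 1 (n-1), (1/2 : ℝ) * (if l.Mem ((i:ℝ), ((0:ℕ):ℝ)) then 1 else 0) ≤ 1/2 := by
    refine sum_le_single_val _ (1/2) (by norm_num) (fun i _ => ?_) (fun i _ => ?_) ?_
    · split_ifs <;> norm_num
    · split_ifs <;> norm_num
    · intro a _ b _ hfa hfb
      have hma : l.Mem ((a:ℝ), ((0:ℕ):ℝ)) := by by_contra h; rw [if_neg h, mul_zero] at hfa; exact hfa rfl
      have hmb : l.Mem ((b:ℝ), ((0:ℕ):ℝ)) := by by_contra h; rw [if_neg h, mul_zero] at hfb; exact hfb rfl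
      unfold Line2.Mem at hma hmb
      simp only [Nat.cast_zero, mul_zero, add_zero] at hma hmb
      have hla : l.a ≠ 0 := by
        intro h0; rw [h0, zero_mul] at hma; exact hc hma.symm
      exact_mod_cast mul_left_cancel₀ hla (hma.trans hmb.symm)
  have hSy : ∑ j ∈ Icc 1 (n-1), (1/2 : ℝ) * (if l.Mem (((0:ℕ):ℝ), (j:ℝ)) then 1 else 0) ≤ 1/2 := by
    refine sum_le_single_val _ (1/2) (by norm_num) (fun i _ => ?_) (fun i _ => ?_) ?_
    · split_ifs <;> norm_num
    · split_ifs <;> norm_num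
    · intro a _ b _ hfa hfb
      have hma : l.Mem (((0:ℕ):ℝ), (a:ℝ)) := by by_contra h; rw [if_neg h, mul_zero] at hfa; exact hfa rfl
      have hmb : l.Mem (((0:ℕ):ℝ), (b:ℝ)) := by by_contra h; rw [if_neg h, mul_zero] at hfb; exact hfb rfl
      unfold Line2.Mem at hma hmb
      simp only [Nat.cast_zero, mul_zero, zero_add] at hma hmb
      have hlb : l.b ≠ 0 := by
        intro h0; rw [h0, zero_mul] at hmb; exact hc hmb.symm
      exact_mod_cast mul_left_cancel₀ hlb (hma.trans hmb.symm)
  -- diagonal part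
  have castle : ∀ a : ℕ, a ≤ n-1 → (a:ℝ) ≤ (n:ℝ)-1 := by
    intro a ha
    have h1 : a + 1 ≤ n := by omega
    have : (a:ℝ) + 1 ≤ (n:ℝ) := by exact_mod_cast h1
    linarith
  have inner_le_one : ∀ t ∈ Icc t₀ (n-1),
      ∑ x ∈ Icc (n-t) (n-1), ((t:ℝ))⁻¹ * (if l.Mem ((x:ℝ), ((2*n-1-t-x : ℕ):ℝ)) then 1 else 0) ≤ 1 := by
    intro t ht
    simp only [mem_Icc] at ht
    have ht0 : (0:ℝ) < (t:ℝ) := by exact_mod_cast (by omega : 0 < t)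
    calc ∑ x ∈ Icc (n-t) (n-1), ((t:ℝ))⁻¹ * (if l.Mem ((x:ℝ), ((2*n-1-t-x : ℕ):ℝ)) then 1 else 0)
        ≤ ∑ x ∈ Icc (n-t) (n-1), ((t:ℝ))⁻¹ := by
          refine Finset.sum_le_sum (fun x hx => ?_)
          have : (if l.Mem ((x:ℝ), ((2*n-1-t-x : ℕ):ℝ)) then (1:ℝ) else 0) ≤ 1 := by
            split_ifs <;> norm_num
          calc ((t:ℝ))⁻¹ * (if l.Mem ((x:ℝ), ((2*n-1-t-x : ℕ):ℝ)) then 1 else 0)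
              ≤ ((t:ℝ))⁻¹ * 1 := by
                refine mul_le_mul_of_nonneg_left this (by positivity)
            _ = ((t:ℝ))⁻¹ := mul_one _
      _ = ((Icc (n-t) (n-1)).card : ℝ) * ((t:ℝ))⁻¹ := by
          rw [Finset.sum_const, nsmul_eq_mul]
      _ = 1 := by
          rw [Nat.card_Icc]
          have : n - 1 + 1 - (n - t) = t := by omega
          rw [this]
          field_simp
  have inner_nonneg : ∀ t ∈ Icc t₀ (n-1),
      0 ≤ ∑ x ∈ Icc (n-t) (n-1), ((t:ℝ))⁻¹ * (if l.Mem ((x:ℝ), ((2*n-1-t-x : ℕ):ℝ)) then 1 else 0) := by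
    intro t ht
    refine Finset.sum_nonneg (fun x hx => ?_)
    have : (0:ℝ) ≤ (if l.Mem ((x:ℝ), ((2*n-1-t-x : ℕ):ℝ)) then (1:ℝ) else 0) := by
      split_ifs <;> norm_num
    positivity
  by_cases hab : l.a = l.b
  · -- slope -1 lines
    have ha0 : l.a ≠ 0 := by
      rcases l.nondeg with h | h
      · exact h
      · rw [hab]; exact h
    by_cases hex : ∃ t ∈ Icc t₀ (n-1), ∃ x ∈ Icc (n-t) (n-1), l.Mem ((x:ℝ), ((2*n-1-t-x : ℕ):ℝ))
    · obtain ⟨ts, hts, xs, hxs, hms⟩ := hex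
      have htsm := hts
      simp only [mem_Icc] at htsm
      have hxsm := hxs
      simp only [mem_Icc] at hxsm
      have hkey : l.a * (2*(n:ℝ)-1-ts) = l.c := by
        unfold Line2.Mem at hms
        rw [diag_cast n ts xs (by omega)] at hms
        linear_combination hms + (2*(n:ℝ)-1-ts-xs)*hab
      have htsr : (ts:ℝ) ≤ (n:ℝ)-1 := castle ts htsm.2
      -- axis sums vanish
      have hSx0 : ∑ i ∈ Icc 1 (n-1), (1/2 : ℝ) * (if l.Mem ((i:ℝ), ((0:ℕ):ℝ)) then 1 else 0) = 0 := by
        refine Finset.sum_eq_zero (fun i hi => ?_)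
        simp only [mem_Icc] at hi
        rw [if_neg, mul_zero]
        intro hm
        unfold Line2.Mem at hm
        simp only [Nat.cast_zero, mul_zero, add_zero] at hm
        have h2 : l.a * (i:ℝ) = l.a * (2*(n:ℝ)-1-ts) := hm.trans hkey.symm
        have h3 : (i:ℝ) = 2*(n:ℝ)-1-ts := mul_left_cancel₀ ha0 h2
        have h4 : (i:ℝ) ≤ (n:ℝ)-1 := castle i hi.2
        have h5 : (2:ℝ) ≤ (n:ℝ) := by exact_mod_cast hn
        linarith
      have hSy0 : ∑ j ∈ Icc 1 (n-1), (1/2 : ℝ) * (if l.Mem (((0:ℕ):ℝ), (j:ℝ)) then 1 else 0) = 0 := by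
        refine Finset.sum_eq_zero (fun j hj => ?_)
        simp only [mem_Icc] at hj
        rw [if_neg, mul_zero]
        intro hm
        unfold Line2.Mem at hm
        simp only [Nat.cast_zero, mul_zero, zero_add] at hm
        have h2 : l.b * (j:ℝ) = l.a * (2*(n:ℝ)-1-ts) := hm.trans hkey.symm
        rw [← hab] at h2
        have h3 : (j:ℝ) = 2*(n:ℝ)-1-ts := mul_left_cancel₀ ha0 h2
        have h4 : (j:ℝ) ≤ (n:ℝ)-1 := castle j hj.2
        have h5 : (2:ℝ) ≤ (n:ℝ) := by exact_mod_cast hn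
        linarith
      have hSd : ∑ t ∈ Icc t₀ (n-1), ∑ x ∈ Icc (n-t) (n-1),
          ((t:ℝ))⁻¹ * (if l.Mem ((x:ℝ), ((2*n-1-t-x : ℕ):ℝ)) then 1 else 0) ≤ 1 := by
        refine sum_le_single_val _ 1 (by norm_num) inner_le_one inner_nonneg ?_
        intro t ht t' ht' hft hft'
        have hpt : ∃ x ∈ Icc (n-t) (n-1), l.Mem ((x:ℝ), ((2*n-1-t-x : ℕ):ℝ)) := by
          by_contra hno
          push_neg at hno
          exact hft (Finset.sum_eq_zero (fun x hx => by rw [if_neg (hno x hx), mul_zero]))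
        have hpt' : ∃ x ∈ Icc (n-t') (n-1), l.Mem ((x:ℝ), ((2*n-1-t'-x : ℕ):ℝ)) := by
          by_contra hno
          push_neg at hno
          exact hft' (Finset.sum_eq_zero (fun x hx => by rw [if_neg (hno x hx), mul_zero]))
        obtain ⟨x, hx, hmx⟩ := hpt
        obtain ⟨x', hx', hmx'⟩ := hpt'
        simp only [mem_Icc] at hx hx' ht ht'
        unfold Line2.Mem at hmx hmx'
        rw [diag_cast n t x (by omega)] at hmx
        rw [diag_cast n t' x' (by omega)] at hmx'
        have e1 : l.a * (2*(n:ℝ)-1-t) = l.c := by linear_combination hmx + (2*(n:ℝ)-1-(t:ℝ)-x)*hab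
        have e2 : l.a * (2*(n:ℝ)-1-t') = l.c := by linear_combination hmx' + (2*(n:ℝ)-1-(t':ℝ)-x')*hab
        have e3 : (2*(n:ℝ)-1-t) = (2*(n:ℝ)-1-t') := mul_left_cancel₀ ha0 (e1.trans e2.symm)
        have : (t:ℝ) = (t':ℝ) := by linarith
        exact_mod_cast this
      rw [hSx0, hSy0, zero_add, zero_add]
      exact hSd
    · push_neg at hex
      have hSd0 : ∑ t ∈ Icc t₀ (n-1), ∑ x ∈ Icc (n-t) (n-1),
          ((t:ℝ))⁻¹ * (if l.Mem ((x:ℝ), ((2*n-1-t-x : ℕ):ℝ)) then 1 else 0) = 0 := by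
        refine Finset.sum_eq_zero (fun t ht => Finset.sum_eq_zero (fun x hx => ?_))
        rw [if_neg (hex t ht x hx), mul_zero]
      rw [hSd0]
      linarith
  · -- lines not of slope -1 meet each diagonal at most once
    have hSd : ∑ t ∈ Icc t₀ (n-1), ∑ x ∈ Icc (n-t) (n-1),
        ((t:ℝ))⁻¹ * (if l.Mem ((x:ℝ), ((2*n-1-t-x : ℕ):ℝ)) then 1 else 0) ≤ 1/2 := by
      calc ∑ t ∈ Icc t₀ (n-1), ∑ x ∈ Icc (n-t) (n-1),
          ((t:ℝ))⁻¹ * (if l.Mem ((x:ℝ), ((2*n-1-t-x : ℕ):ℝ)) then 1 else 0)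
          ≤ ∑ t ∈ Icc t₀ (n-1), ((t:ℝ))⁻¹ := by
            refine Finset.sum_le_sum (fun t ht => ?_)
            have htm := ht
            simp only [mem_Icc] at htm
            have ht0 : (0:ℝ) < (t:ℝ) := by exact_mod_cast (by omega : 0 < t)
            refine sum_le_single_val _ ((t:ℝ))⁻¹ (by positivity) (fun x hx => ?_) (fun x hx => ?_) ?_
            · have : (if l.Mem ((x:ℝ), ((2*n-1-t-x : ℕ):ℝ)) then (1:ℝ) else 0) ≤ 1 := by
                split_ifs <;> norm_num
              calc ((t:ℝ))⁻¹ * (if l.Mem ((x:ℝ), ((2*n-1-t-x : ℕ):ℝ)) then 1 else 0)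
                  ≤ ((t:ℝ))⁻¹ * 1 := mul_le_mul_of_nonneg_left this (by positivity)
                _ = ((t:ℝ))⁻¹ := mul_one _
            · have : (0:ℝ) ≤ (if l.Mem ((x:ℝ), ((2*n-1-t-x : ℕ):ℝ)) then (1:ℝ) else 0) := by
                split_ifs <;> norm_num
              positivity
            · intro x hx x' hx' hfx hfx'
              have hmx : l.Mem ((x:ℝ), ((2*n-1-t-x : ℕ):ℝ)) := by
                by_contra h; rw [if_neg h, mul_zero] at hfx; exact hfx rfl
              have hmx' : l.Mem ((x':ℝ), ((2*n-1-t-x' : ℕ):ℝ)) := by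
                by_contra h; rw [if_neg h, mul_zero] at hfx'; exact hfx' rfl
              simp only [mem_Icc] at hx hx'
              unfold Line2.Mem at hmx hmx'
              rw [diag_cast n t x (by omega)] at hmx
              rw [diag_cast n t x' (by omega)] at hmx'
              have h3 : (l.a - l.b) * ((x:ℝ) - (x':ℝ)) = 0 := by linear_combination hmx - hmx'
              rcases mul_eq_zero.mp h3 with h | h
              · exact absurd (by linarith : l.a = l.b) hab
              · have : (x:ℝ) = (x':ℝ) := by linarith
                exact_mod_cast this
        _ ≤ 1/2 := hH
    by_cases hpx : ∃ i ∈ Icc 1 (n-1), l.Mem ((i:ℝ), ((0:ℕ):ℝ))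
    · by_cases hqy : ∃ j ∈ Icc 1 (n-1), l.Mem (((0:ℕ):ℝ), (j:ℝ))
      · -- two-axis line: diagonal sum vanishes
        obtain ⟨p, hp, hmp⟩ := hpx
        obtain ⟨q, hq, hmq⟩ := hqy
        simp only [mem_Icc] at hp hq
        unfold Line2.Mem at hmp hmq
        simp only [Nat.cast_zero, mul_zero, add_zero, zero_add] at hmp hmq
        have hSd0 : ∑ t ∈ Icc t₀ (n-1), ∑ x ∈ Icc (n-t) (n-1),
            ((t:ℝ))⁻¹ * (if l.Mem ((x:ℝ), ((2*n-1-t-x : ℕ):ℝ)) then 1 else 0) = 0 := by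
          refine Finset.sum_eq_zero (fun t ht => Finset.sum_eq_zero (fun x hx => ?_))
          simp only [mem_Icc] at ht hx
          rw [if_neg, mul_zero]
          intro hm
          unfold Line2.Mem at hm
          rw [diag_cast n t x (by omega)] at hm
          set y : ℝ := 2*(n:ℝ)-1-t-x with hy
          have hkey : l.c * ((q:ℝ)*(x:ℝ) + (p:ℝ)*y) = l.c * ((p:ℝ)*(q:ℝ)) := by
            linear_combination (-(q:ℝ)*(x:ℝ))*hmp + (-(p:ℝ)*y)*hmq + ((p:ℝ)*(q:ℝ))*hm
          have hkey2 : (q:ℝ)*(x:ℝ) + (p:ℝ)*y = (p:ℝ)*(q:ℝ) := mul_left_cancel₀ hc hkey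
          -- numeric facts
          have hx1 : (1:ℝ) ≤ (x:ℝ) := by exact_mod_cast (by omega : 1 ≤ x)
          have hxn : (x:ℝ) ≤ (n:ℝ)-1 := castle x hx.2
          have htn : (t:ℝ) ≤ (n:ℝ)-1 := castle t ht.2
          have hxt : (n:ℝ) - (t:ℝ) ≤ (x:ℝ) := by
            have h0 : n - t ≤ x := hx.1
            have h1 : (n:ℝ) ≤ (x:ℝ) + (t:ℝ) := by exact_mod_cast (by omega : n ≤ x + t)
            linarith
          have hy1 : (1:ℝ) ≤ y := by rw [hy]; linarith
          have hxy : (n:ℝ) ≤ (x:ℝ) + y := by rw [hy]; linarith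
          have hp1 : (1:ℝ) ≤ (p:ℝ) := by exact_mod_cast hp.1
          have hpn : (p:ℝ) ≤ (n:ℝ)-1 := castle p hp.2
          have hq1 : (1:ℝ) ≤ (q:ℝ) := by exact_mod_cast hq.1
          have hqn : (q:ℝ) ≤ (n:ℝ)-1 := castle q hq.2
          by_cases hpq : (q:ℝ) ≤ (p:ℝ)
          · have A : (0:ℝ) ≤ ((p:ℝ)-(q:ℝ))*y := mul_nonneg (by linarith) (by linarith)
            have B : (0:ℝ) ≤ (q:ℝ)*((x:ℝ)+y-(n:ℝ)) := mul_nonneg (by linarith) (by linarith)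
            have C : (0:ℝ) ≤ (q:ℝ)*(((n:ℝ)-1)-(p:ℝ)) := mul_nonneg (by linarith) (by linarith)
            nlinarith [A, B, C, hkey2, hq1]
          · have A : (0:ℝ) ≤ ((q:ℝ)-(p:ℝ))*(x:ℝ) := mul_nonneg (by linarith) (by linarith)
            have B : (0:ℝ) ≤ (p:ℝ)*((x:ℝ)+y-(n:ℝ)) := mul_nonneg (by linarith) (by linarith)
            have C : (0:ℝ) ≤ (p:ℝ)*(((n:ℝ)-1)-(q:ℝ)) := mul_nonneg (by linarith) (by linarith)
            nlinarith [A, B, C, hkey2, hp1]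
        rw [hSd0]
        linarith
      · -- no y-axis point
        push_neg at hqy
        have hSy0 : ∑ j ∈ Icc 1 (n-1), (1/2 : ℝ) * (if l.Mem (((0:ℕ):ℝ), (j:ℝ)) then 1 else 0) = 0 := by
          refine Finset.sum_eq_zero (fun j hj => ?_)
          rw [if_neg (hqy j hj), mul_zero]
        rw [hSy0]
        linarith
    · push_neg at hpx
      have hSx0 : ∑ i ∈ Icc 1 (n-1), (1/2 : ℝ) * (if l.Mem ((i:ℝ), ((0:ℕ):ℝ)) then 1 else 0) = 0 := by
        refine Finset.sum_eq_zero (fun i hi => ?_)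
        rw [if_neg (hpx i hi), mul_zero]
      rw [hSx0]
      linarith

lemma wt_total (n t₀ : ℕ) (hn : 2 ≤ n) (ht1 : 1 ≤ t₀) (ht2 : t₀ ≤ n-1) :
    ∑ p ∈ Finset.range n ×ˢ Finset.range n, wt n t₀ p
      = ((n-1 : ℕ):ℝ) + ((n-t₀ : ℕ):ℝ) := by
  have h := wt_sum_eq n t₀ hn ht1 (fun _ => 1)
  simp only [mul_one] at h
  have hinner : ∀ t ∈ Icc t₀ (n-1), ∑ _x ∈ Icc (n-t) (n-1), ((t:ℝ))⁻¹ = 1 := by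
    intro t ht
    simp only [mem_Icc] at ht
    rw [Finset.sum_const, Nat.card_Icc, nsmul_eq_mul]
    have e : n - 1 + 1 - (n - t) = t := by omega
    rw [e]
    have ht0 : (t:ℝ) ≠ 0 := by
      have : 0 < t := by omega
      positivity
    field_simp
  rw [h, Finset.sum_congr rfl hinner, Finset.sum_const, Finset.sum_const,
    Nat.card_Icc, Nat.card_Icc]
  have e1 : n - 1 + 1 - 1 = n - 1 := by omega
  have e2 : n - 1 + 1 - t₀ = n - t₀ := by omega
  rw [e1, e2, nsmul_eq_mul, nsmul_eq_mul, mul_one]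
  ring

lemma card_filter_real (L : Multiset Line2) (pred : Line2 → Prop) [DecidablePred pred] :
    ((L.filter pred).card : ℝ) = (L.map (fun ℓ => if pred ℓ then (1:ℝ) else 0)).sum := by
  induction L using Multiset.induction_on with
  | empty => simp
  | cons a s ih =>
    by_cases h : pred a <;>
      simp [Multiset.filter_cons, h, ← ih] <;> push_cast <;> ring

lemma swap_sum (L : Multiset Line2) (s : Finset (ℕ×ℕ)) (g : Line2 → ℕ×ℕ → ℝ) :
    ∑ p ∈ s, (L.map (fun ℓ => g ℓ p)).sum = (L.map (fun ℓ => ∑ p ∈ s, g ℓ p)).sum := by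
  induction L using Multiset.induction_on with
  | empty => simp
  | cons a t ih => simp [Finset.sum_add_distrib, ih]

lemma main_bound (n k t₀ : ℕ) (hn : 2 ≤ n) (ht1 : 1 ≤ t₀) (ht2 : t₀ ≤ n-1)
    (hH : ∑ t ∈ Icc t₀ (n-1), ((t:ℝ))⁻¹ ≤ 1/2)
    (L : Multiset Line2) (hL : IsKCover (stdGrid n) k L) :
    (k:ℝ) * (((n-1 : ℕ):ℝ) + ((n-t₀ : ℕ):ℝ)) ≤ (Multiset.card L : ℝ) := by
  classical
  calc (k:ℝ) * (((n-1 : ℕ):ℝ) + ((n-t₀ : ℕ):ℝ))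
      = ∑ p ∈ Finset.range n ×ˢ Finset.range n, (k:ℝ) * wt n t₀ p := by
        rw [← Finset.mul_sum, wt_total n t₀ hn ht1 ht2]
    _ ≤ ∑ p ∈ Finset.range n ×ˢ Finset.range n,
          wt n t₀ p * ((L.filter (fun l => l.Mem ((p.1:ℝ), (p.2:ℝ)))).card : ℝ) := by
        refine Finset.sum_le_sum (fun p hp => ?_)
        by_cases hw : wt n t₀ p = 0
        · rw [hw, mul_zero, zero_mul]
        · simp only [mem_product, mem_range] at hp
          have hgrid : (((p.1:ℕ):ℝ), ((p.2:ℕ):ℝ)) ∈ stdGrid n := ⟨p.1, hp.1, p.2, hp.2, rfl⟩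
          have hne0 : ¬(p.1 = 0 ∧ p.2 = 0) := by
            intro h
            apply hw
            unfold wt
            rw [if_pos h]
          have hzz : (((p.1:ℕ):ℝ), ((p.2:ℕ):ℝ)) ≠ ((0:ℝ), (0:ℝ)) := by
            intro h
            rw [Prod.mk.injEq] at h
            exact hne0 ⟨by exact_mod_cast h.1, by exact_mod_cast h.2⟩
          have hk' := hL.2 _ hgrid hzz
          have hkr : (k:ℝ) ≤ ((L.filter (fun l => l.Mem ((p.1:ℝ), (p.2:ℝ)))).card : ℝ) := by
            exact_mod_cast hk'
          have hwpos : 0 ≤ wt n t₀ p := wt_nonneg n t₀ p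
          calc (k:ℝ) * wt n t₀ p = wt n t₀ p * (k:ℝ) := mul_comm _ _
            _ ≤ wt n t₀ p * _ := mul_le_mul_of_nonneg_left hkr hwpos
    _ = ∑ p ∈ Finset.range n ×ˢ Finset.range n,
          (L.map (fun ℓ => wt n t₀ p * (if ℓ.Mem ((p.1:ℝ), (p.2:ℝ)) then 1 else 0))).sum := by
        refine Finset.sum_congr rfl (fun p _ => ?_)
        rw [card_filter_real, ← Multiset.sum_map_mul_left]
    _ = (L.map (fun ℓ => ∑ p ∈ Finset.range n ×ˢ Finset.range n,
          wt n t₀ p * (if ℓ.Mem ((p.1:ℝ), (p.2:ℝ)) then 1 else 0))).sum :=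
        swap_sum L _ _
    _ ≤ (L.map (fun _ => (1:ℝ))).sum := by
        refine Multiset.sum_map_le_sum_map _ _ (fun ℓ hℓ => ?_)
        exact line_wt_le n t₀ hn ht1 ht2 hH ℓ (hL.1 ℓ hℓ)
    _ = (Multiset.card L : ℝ) := by
        rw [Multiset.map_const', Multiset.sum_replicate, nsmul_eq_mul, mul_one]

lemma cover_nonempty (n k : ℕ) (hk : 1 ≤ k) :
    {m | ∃ L : Multiset Line2, IsKCover (stdGrid n) k L ∧ Multiset.card L = m}.Nonempty := by
  classical
  set V : ℕ → Line2 := fun i => ⟨1, 0, (i:ℝ), Or.inl one_ne_zero⟩ with hV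
  set H : ℕ → Line2 := fun j => ⟨0, 1, (j:ℝ), Or.inr one_ne_zero⟩ with hHdef
  set M : Multiset Line2 := ((Finset.Icc 1 (n-1)).val.map V) + ((Finset.Icc 1 (n-1)).val.map H) with hM
  refine ⟨Multiset.card (k • M), k • M, ⟨?_, ?_⟩, rfl⟩
  · intro l hl
    obtain ⟨-, hl⟩ := Multiset.mem_nsmul.mp hl
    rw [hM, Multiset.mem_add] at hl
    rcases hl with hl | hl <;>
      (rw [Multiset.mem_map] at hl
       obtain ⟨i, hi, rfl⟩ := hl
       rw [Finset.mem_val, Finset.mem_Icc] at hi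
       intro hmem
       unfold Line2.Mem at hmem
       simp only [hV, hHdef, mul_zero, zero_mul, add_zero, zero_add] at hmem
       have : i = 0 := by exact_mod_cast hmem.symm
       omega)
  · rintro p hp hp0
    obtain ⟨i, hi, j, hj, rfl⟩ := hp
    have hij : ¬(i = 0 ∧ j = 0) := by
      rintro ⟨h1, h2⟩
      apply hp0
      rw [h1, h2]
      norm_num
    by_cases hi1 : 1 ≤ i
    · have hmemM : V i ∈ M := by
        rw [hM, Multiset.mem_add]
        left
        rw [Multiset.mem_map]
        exact ⟨i, Finset.mem_val.mpr (Finset.mem_Icc.mpr ⟨hi1, by omega⟩), rfl⟩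
      have hcount : 1 ≤ M.count (V i) := Multiset.count_pos.mpr hmemM
      have hpred : (V i).Mem ((i:ℝ), (j:ℝ)) := by
        unfold Line2.Mem
        simp [hV]
      calc k = k * 1 := (mul_one k).symm
        _ ≤ k * M.count (V i) := Nat.mul_le_mul_left k hcount
        _ = (k • M).count (V i) := by rw [Multiset.count_nsmul]
        _ = ((k • M).filter (fun l => l.Mem ((i:ℝ), (j:ℝ)))).count (V i) := by
            rw [Multiset.count_filter, if_pos hpred]
        _ ≤ Multiset.card ((k • M).filter (fun l => l.Mem ((i:ℝ), (j:ℝ)))) :=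
            Multiset.count_le_card _ _
    · have hj1 : 1 ≤ j := by omega
      have hmemM : H j ∈ M := by
        rw [hM, Multiset.mem_add]
        right
        rw [Multiset.mem_map]
        exact ⟨j, Finset.mem_val.mpr (Finset.mem_Icc.mpr ⟨hj1, by omega⟩), rfl⟩
      have hcount : 1 ≤ M.count (H j) := Multiset.count_pos.mpr hmemM
      have hpred : (H j).Mem ((i:ℝ), (j:ℝ)) := by
        unfold Line2.Mem
        simp [hHdef]
      calc k = k * 1 := (mul_one k).symm
        _ ≤ k * M.count (H j) := Nat.mul_le_mul_left k hcount
        _ = (k • M).count (H j) := by rw [Multiset.count_nsmul]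
        _ = ((k • M).filter (fun l => l.Mem ((i:ℝ), (j:ℝ)))).count (H j) := by
            rw [Multiset.count_filter, if_pos hpred]
        _ ≤ Multiset.card ((k • M).filter (fun l => l.Mem ((i:ℝ), (j:ℝ)))) :=
            Multiset.count_le_card _ _

theorem stmt6 :
    ∀ ε : ℝ, 0 < ε → ∃ N : ℕ, ∀ n : ℕ, N ≤ n → ∀ k : ℕ, 1 ≤ k →
      (2 - Real.exp (-(1 / 2)) - ε) * ((k : ℝ) * ((n : ℝ) - 1))
        ≤ (cov (stdGrid n) k : ℝ) := by
  intro ε hε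
  refine ⟨max 10 (⌈1/ε⌉₊ + 2), fun n hn k hk => ?_⟩
  have hn10 : 10 ≤ n := le_trans (le_max_left _ _) hn
  have hnε : ⌈1/ε⌉₊ + 2 ≤ n := le_trans (le_max_right _ _) hn
  have hn2 : 2 ≤ n := by omega
  set E := Real.exp (-(1/2)) with hE
  have hE0 : 0 < E := Real.exp_pos _
  have hE23 : E ≤ 2/3 := by
    have h1 : (1:ℝ) + 1/2 ≤ Real.exp (1/2) := by
      have := Real.add_one_le_exp (1/2 : ℝ)
      linarith
    have h2 : Real.exp (-(1/2)) = (Real.exp (1/2))⁻¹ := by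
      rw [← Real.exp_neg]
    rw [hE, h2]
    have h3 : ((3:ℝ)/2)⁻¹ = 2/3 := by norm_num
    rw [← h3]
    exact inv_anti₀ (by norm_num) (by linarith)
  have hnr : (2:ℝ) ≤ (n:ℝ) := by exact_mod_cast hn2
  have hnr10 : (10:ℝ) ≤ (n:ℝ) := by exact_mod_cast hn10
  set x := ((n:ℝ) - 1) * E with hx
  have hx0 : 0 < x := by
    apply mul_pos _ hE0
    linarith
  set t₀ := ⌈x⌉₊ + 1 with ht₀
  have hceil : x ≤ (⌈x⌉₊ : ℝ) := Nat.le_ceil x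
  have hceil2 : (⌈x⌉₊ : ℝ) < x + 1 := Nat.ceil_lt_add_one (le_of_lt hx0)
  have ht2 : 2 ≤ t₀ := by
    have : 1 ≤ ⌈x⌉₊ := Nat.one_le_ceil_iff.mpr hx0
    omega
  have hxe : x = (n:ℝ)*E - E := by rw [hx]; ring
  have htn : t₀ ≤ n - 1 := by
    have h1 : (⌈x⌉₊:ℝ) < (n:ℝ) - 2 := by
      have h2 : x + 1 ≤ (2/3)*((n:ℝ)-1) + 1 := by
        have : x ≤ (2/3)*((n:ℝ)-1) := by
          rw [hx, mul_comm]
          apply mul_le_mul_of_nonneg_right hE23 (by linarith)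
        linarith
      have h3 : (2/3)*((n:ℝ)-1) + 1 ≤ (n:ℝ) - 2 := by linarith
      linarith
    have h4 : (((n:ℕ) - 2 : ℕ):ℝ) = (n:ℝ) - 2 := by
      push_cast [Nat.cast_sub hn2]
      ring
    have h5 : ⌈x⌉₊ < n - 2 := by
      rw [← h4] at h1
      exact_mod_cast h1
    omega
  have hH : ∑ t ∈ Icc t₀ (n-1), ((t:ℝ))⁻¹ ≤ 1/2 := by
    have h1 := harmonic_Icc_le t₀ ht2 (n-1) (by omega)
    have hc1 : (t₀:ℝ) - 1 = (⌈x⌉₊:ℝ) := by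
      rw [ht₀]
      push_cast
      ring
    have hn1c : ((n-1:ℕ):ℝ) = (n:ℝ) - 1 := by
      push_cast [Nat.cast_sub (by omega : 1 ≤ n)]
      ring
    rw [hc1, hn1c] at h1
    have h2 : Real.log x ≤ Real.log (⌈x⌉₊:ℝ) := Real.log_le_log hx0 hceil
    have h3 : Real.log x = Real.log ((n:ℝ)-1) + Real.log E := by
      rw [hx]
      exact Real.log_mul (by linarith) (ne_of_gt hE0)
    have h4 : Real.log E = -(1/2) := Real.log_exp _
    linarith
  obtain ⟨L, hL, hcard⟩ := Nat.sInf_mem (cover_nonempty n k hk)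
  have hmain := main_bound n k t₀ hn2 (by omega) htn hH L hL
  unfold cov
  rw [hcard] at hmain
  have hw1 : ((n-1:ℕ):ℝ) = (n:ℝ) - 1 := by
    push_cast [Nat.cast_sub (by omega : 1 ≤ n)]
    ring
  have hw2 : ((n-t₀:ℕ):ℝ) = (n:ℝ) - (t₀:ℝ) := by
    push_cast [Nat.cast_sub (by omega : t₀ ≤ n)]
    ring
  have ht0r : (t₀:ℝ) ≤ x + 2 := by
    rw [ht₀]
    push_cast
    linarith
  have hεn : 1 ≤ ε * ((n:ℝ)-1) := by
    have h1 : (1/ε) ≤ (⌈1/ε⌉₊:ℝ) := Nat.le_ceil _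
    have h2 : ((⌈1/ε⌉₊:ℝ)) + 2 ≤ (n:ℝ) := by exact_mod_cast hnε
    have h3 : 1/ε ≤ (n:ℝ) - 1 := by linarith
    calc (1:ℝ) = ε * (1/ε) := by field_simp
      _ ≤ ε * ((n:ℝ)-1) := mul_le_mul_of_nonneg_left h3 (le_of_lt hε)
  calc (2 - E - ε) * ((k:ℝ) * ((n:ℝ)-1))
      = (k:ℝ) * ((2-E)*((n:ℝ)-1) - ε*((n:ℝ)-1)) := by ring
    _ ≤ (k:ℝ) * (((n-1:ℕ):ℝ) + ((n-t₀:ℕ):ℝ)) := by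
        apply mul_le_mul_of_nonneg_left _ (by positivity)
        rw [hw1, hw2]
        linarith
    _ ≤ _ := hmain
end

section
/- Let S₁, S₂ ⊆ ℝ be finite sets with 0 ∈ S₁ ∩ S₂ and let Γ = S₁ × S₂ ⊆ ℝ². Suppose u is a nonnegative real-valued function on the set of affine lines in ℝ² not passing through the origin, supported on a finite set of s lines, such that for every point p ∈ Γ \ {(0,0)} the sum of u(ℓ) over lines ℓ containing p is at least 1. Then for every integer k ≥ 1 there exists a k-cover of Γ of cardinality at most k · Σ_ℓ u(ℓ) + s; in particular cov_k(Γ) ≤ k · Σ_ℓ u(ℓ) + s. -/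
open scoped Classical

/-!
Take each line `ℓ` of the support of `u` exactly `⌈k u(ℓ)⌉` times. A point `p ≠ 0` of the grid
then lies on at least `∑_{ℓ ∋ p} k u(ℓ) ≥ k` of these lines, while rounding up costs at most one
extra copy per line, which accounts for the additive `s`.
-/

section CeilMultiset

variable {α : Type*}

noncomputable def ceilMultiset (F : Finset α) (w : α → ℝ) : Multiset α :=
  ∑ a ∈ F, Multiset.replicate ⌈w a⌉₊ a

variable (F : Finset α) (w : α → ℝ)

theorem mem_ceilMultiset {a : α} : a ∈ ceilMultiset F w ↔ a ∈ F ∧ 0 < w a := by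
  simp only [ceilMultiset, Multiset.mem_sum, Multiset.mem_replicate, ← Nat.pos_iff_ne_zero,
    Nat.ceil_pos]
  constructor
  · rintro ⟨b, hb, hw, rfl⟩
    exact ⟨hb, hw⟩
  · rintro ⟨ha, hw⟩
    exact ⟨a, ha, hw, rfl⟩

theorem card_ceilMultiset : Multiset.card (ceilMultiset F w) = ∑ a ∈ F, ⌈w a⌉₊ := by
  simp only [ceilMultiset, Multiset.card_sum, Multiset.card_replicate]

theorem filter_ceilMultiset (P : α → Prop) [DecidablePred P] :
    (ceilMultiset F w).filter P = ceilMultiset (F.filter P) w := by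
  induction F using Finset.induction_on with
  | empty => simp [ceilMultiset]
  | insert a F ha ih =>
    simp only [ceilMultiset] at ih ⊢
    rw [Finset.sum_insert ha, Multiset.filter_add, ih, Finset.filter_insert]
    split_ifs with hP
    · rw [Finset.sum_insert (by simp [ha]), Multiset.filter_eq_self.2]
      exact fun b hb => Multiset.eq_of_mem_replicate hb ▸ hP
    · rw [Multiset.filter_eq_nil.2 (fun b hb => Multiset.eq_of_mem_replicate hb ▸ hP), zero_add]

theorem sum_le_card_ceilMultiset : ∑ a ∈ F, w a ≤ Multiset.card (ceilMultiset F w) := by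
  rw [card_ceilMultiset, Nat.cast_sum]
  exact Finset.sum_le_sum fun a _ => Nat.le_ceil (w a)

theorem card_ceilMultiset_le (hw : ∀ a ∈ F, 0 ≤ w a) :
    (Multiset.card (ceilMultiset F w) : ℝ) ≤ ∑ a ∈ F, w a + F.card := by
  rw [card_ceilMultiset, Nat.cast_sum, Finset.card_eq_sum_ones, Nat.cast_sum, Nat.cast_one,
    ← Finset.sum_add_distrib]
  exact Finset.sum_le_sum fun a ha => (Nat.ceil_lt_add_one (hw a ha)).le

end CeilMultiset

theorem cov_le_card {Γ : Set (ℝ × ℝ)} {k : ℕ} {L : Multiset Line2} (hL : IsKCover Γ k L) :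
    cov Γ k ≤ Multiset.card L :=
  Nat.sInf_le ⟨L, hL, rfl⟩

theorem isKCover_ceilMultiset {Γ : Set (ℝ × ℝ)} {u : Line2 → ℝ}
    (huorig : ∀ l : Line2, u l ≠ 0 → ¬ l.Mem (0, 0)) (F : Finset Line2)
    (hpoint : ∀ p ∈ Γ, p ≠ (0, 0) → 1 ≤ ∑ l ∈ F, (if l.Mem p then u l else 0)) (k : ℕ) :
    IsKCover Γ k (ceilMultiset F fun l => k * u l) := by
  refine ⟨fun l hl => huorig l ?_, fun p hp hp0 => ?_⟩
  · exact right_ne_zero_of_mul ((mem_ceilMultiset F _).1 hl).2.ne'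
  · have : (k : ℝ) ≤ ∑ l ∈ F with l.Mem p, k * u l := by
      rw [← Finset.mul_sum, Finset.sum_filter]
      simpa using mul_le_mul_of_nonneg_left (hpoint p hp hp0) k.cast_nonneg
    rw [filter_ceilMultiset]
    exact_mod_cast this.trans (sum_le_card_ceilMultiset _ _)

theorem stmt10_general (S₁ S₂ : Finset ℝ)
    (u : Line2 → ℝ) (hu0 : ∀ l, 0 ≤ u l)
    (huorig : ∀ l : Line2, u l ≠ 0 → ¬ l.Mem (0, 0))
    (F : Finset Line2) (s : ℕ) (hFcard : F.card = s)
    (hpoint : ∀ p ∈ (S₁ ×ˢ S₂ : Finset (ℝ × ℝ)), p ≠ (0, 0) →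
      1 ≤ ∑ l ∈ F, (if l.Mem p then u l else 0))
    (k : ℕ) :
    (∃ L : Multiset Line2, IsKCover (↑(S₁ ×ˢ S₂)) k L ∧
        (Multiset.card L : ℝ) ≤ (k : ℝ) * ∑ l ∈ F, u l + (s : ℝ)) ∧
      (cov (↑(S₁ ×ˢ S₂)) k : ℝ) ≤ (k : ℝ) * ∑ l ∈ F, u l + (s : ℝ) := by
  set L := ceilMultiset F fun l => k * u l
  have hL : IsKCover (↑(S₁ ×ˢ S₂)) k L :=
    isKCover_ceilMultiset huorig F (fun p hp => hpoint p (Finset.mem_coe.1 hp)) k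
  have hcard : (Multiset.card L : ℝ) ≤ (k : ℝ) * ∑ l ∈ F, u l + (s : ℝ) := by
    rw [Finset.mul_sum, ← hFcard]
    exact card_ceilMultiset_le F _ fun l _ => mul_nonneg k.cast_nonneg (hu0 l)
  exact ⟨⟨L, hL, hcard⟩, (Nat.cast_le.2 (cov_le_card hL)).trans hcard⟩

theorem stmt10 (S₁ S₂ : Finset ℝ)
    (h0₁ : (0 : ℝ) ∈ S₁) (h0₂ : (0 : ℝ) ∈ S₂)
    (u : Line2 → ℝ) (hu0 : ∀ l, 0 ≤ u l)
    (huorig : ∀ l : Line2, u l ≠ 0 → ¬ l.Mem (0, 0))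
    (F : Finset Line2) (s : ℕ) (hFcard : F.card = s)
    (husupp : ∀ l : Line2, l ∉ F → u l = 0)
    (hpoint : ∀ p ∈ (S₁ ×ˢ S₂ : Finset (ℝ × ℝ)), p ≠ (0, 0) →
      1 ≤ ∑ l ∈ F, (if l.Mem p then u l else 0))
    (k : ℕ) (hk : 1 ≤ k) :
    (∃ L : Multiset Line2, IsKCover (↑(S₁ ×ˢ S₂)) k L ∧
        (Multiset.card L : ℝ) ≤ (k : ℝ) * ∑ l ∈ F, u l + (s : ℝ)) ∧
      (cov (↑(S₁ ×ˢ S₂)) k : ℝ) ≤ (k : ℝ) * ∑ l ∈ F, u l + (s : ℝ) :=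
  stmt10_general S₁ S₂ u hu0 huorig F s hFcard hpoint k
end
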